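/- arXiv:1408.4255 — 4 statements merged into one kernel-verified Lean document; each statement's English description precedes it below -/
import Mathlib

section
/- Let L be a finite lattice and a ∈ L a meet-irreducible element, i.e., a is covered by exactly one element a₊. Then the quotient set L/∼ₐ, where ∼ₐ identifies a with a₊ and nothing else, carries a natural lattice structure such that the canonical surjection πₐ : L → L/∼ₐ preserves joins. -/
section Stmt2Aux

variable {L : Type*} [Lattice L] [Fintype L] {a aPlus : L}

private lemma stmt2_hplus (hcov : a ⋖ aPlus) (huniq : ∀ b : L, a ⋖ b → b = aPlus)
    {z : L} (hz : a < z) : aPlus ≤ z := by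
  obtain ⟨c, hc, hmin⟩ :=
    (Finite.to_wellFoundedLT (α := L)).wf.has_min {c | a < c ∧ c ≤ z} ⟨z, hz, le_rfl⟩
  have hcc : a ⋖ c := ⟨hc.1, fun d hd1 hd2 => hmin d ⟨hd1, hd2.le.trans hc.2⟩ hd2⟩
  exact (huniq c hcc) ▸ hc.2

private lemma stmt2_inf_ne (hcov : a ⋖ aPlus) (huniq : ∀ b : L, a ⋖ b → b = aPlus)
    {p q : L} (hp : p ≠ a) (hq : q ≠ a) : p ⊓ q ≠ a := by
  intro h
  have hap : a < p := lt_of_le_of_ne (h ▸ inf_le_left) (Ne.symm hp)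
  have haq : a < q := lt_of_le_of_ne (h ▸ inf_le_right) (Ne.symm hq)
  have : aPlus ≤ a := h ▸ le_inf (stmt2_hplus hcov huniq hap) (stmt2_hplus hcov huniq haq)
  exact absurd this hcov.lt.not_ge

/-- The representative map: send `a` to `aPlus`, fix everything else. -/
private def stmt2_pv (a aPlus : L) [DecidableEq L] (x : L) : L :=
  if x = a then aPlus else x

private lemma stmt2_pv_ne [DecidableEq L] (hcov : a ⋖ aPlus) (x : L) :
    stmt2_pv a aPlus x ≠ a := by
  unfold stmt2_pv
  split
  · exact hcov.lt.ne'
  · assumption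

/-- The lattice structure on `{x : L // x ≠ a}`. -/
private def stmt2_lattice [DecidableEq L] (hcov : a ⋖ aPlus)
    (huniq : ∀ b : L, a ⋖ b → b = aPlus) : Lattice {x : L // x ≠ a} where
  __ := Subtype.semilatticeInf (fun _ _ hp hq => stmt2_inf_ne hcov huniq hp hq)
  sup p q := ⟨stmt2_pv a aPlus (p.1 ⊔ q.1), stmt2_pv_ne hcov _⟩
  le_sup_left p q := by
    show p.1 ≤ stmt2_pv a aPlus (p.1 ⊔ q.1)
    unfold stmt2_pv
    split
    · exact le_trans (le_sup_left.trans_eq ‹p.1 ⊔ q.1 = a›) hcov.lt.le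
    · exact le_sup_left
  le_sup_right p q := by
    show q.1 ≤ stmt2_pv a aPlus (p.1 ⊔ q.1)
    unfold stmt2_pv
    split
    · exact le_trans (le_sup_right.trans_eq ‹p.1 ⊔ q.1 = a›) hcov.lt.le
    · exact le_sup_right
  sup_le p q z hp hq := by
    show stmt2_pv a aPlus (p.1 ⊔ q.1) ≤ z.1
    unfold stmt2_pv
    split
    next h =>
      have haz : a ≤ z.1 := h.symm.trans_le (sup_le hp hq)
      exact stmt2_hplus hcov huniq (lt_of_le_of_ne haz (Ne.symm z.2))
    · exact sup_le hp hq

private lemma stmt2_pv_sup_left [DecidableEq L] (hcov : a ⋖ aPlus)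
    (huniq : ∀ b : L, a ⋖ b → b = aPlus) (z : L) :
    stmt2_pv a aPlus (a ⊔ z) = stmt2_pv a aPlus (aPlus ⊔ z) := by
  by_cases hz : z ≤ a
  · rw [sup_eq_left.mpr hz, sup_eq_left.mpr (hz.trans hcov.lt.le)]
    simp [stmt2_pv, hcov.lt.ne']
  · have h1 : a < a ⊔ z := lt_of_le_of_ne le_sup_left (fun h => hz (sup_eq_left.mp h.symm))
    have h2 : aPlus ⊔ z = a ⊔ z := by
      apply le_antisymm
      · exact sup_le (stmt2_hplus hcov huniq h1) le_sup_right
      · exact sup_le (hcov.lt.le.trans le_sup_left) le_sup_right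
    rw [h2]

end Stmt2Aux

/-- Let `L` be a finite lattice and `a ∈ L` meet-irreducible,
i.e. covered by exactly one element `a₊`.  Then the quotient of `L` by the
equivalence relation identifying `a` with `a₊` (and nothing else) carries a
lattice structure such that the canonical surjection preserves joins. -/
theorem stmt_2 {L : Type*} [Lattice L] [Fintype L] (a aPlus : L)
    (hcov : a ⋖ aPlus) (huniq : ∀ b : L, a ⋖ b → b = aPlus) :
    ∃ (Q : Type) (_ : Lattice Q) (π : L → Q),
      Function.Surjective π ∧
      (∀ x y : L, π x = π y ↔
        (x = y ∨ (x = a ∧ y = aPlus) ∨ (x = aPlus ∧ y = a))) ∧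
      (∀ x y : L, π (x ⊔ y) = π x ⊔ π y) := by
  classical
  set Q' := {x : L // x ≠ a} with hQ'
  letI : Lattice Q' := stmt2_lattice hcov huniq
  -- transfer to a `Type 0` via `Fin`
  set n := Fintype.card Q' with hn
  set e : Fin n ≃ Q' := (Fintype.equivFin Q').symm with he
  letI instMax : Max (Fin n) := ⟨fun p q => e.symm (e p ⊔ e q)⟩
  letI instMin : Min (Fin n) := ⟨fun p q => e.symm (e p ⊓ e q)⟩
  letI instLE : LE (Fin n) := ⟨fun p q => e p ≤ e q⟩
  letI instLT : LT (Fin n) := ⟨fun p q => e p < e q⟩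
  letI instLat : Lattice (Fin n) :=
    e.injective.lattice e Iff.rfl Iff.rfl (fun p q => e.apply_symm_apply _)
      (fun p q => e.apply_symm_apply _)
  -- the projection
  set π' : L → Q' := fun x => ⟨stmt2_pv a aPlus x, stmt2_pv_ne hcov x⟩ with hπ'
  set π : L → Fin n := fun x => e.symm (π' x) with hπ
  have hπ'xy : ∀ x y : L, π x = π y ↔ stmt2_pv a aPlus x = stmt2_pv a aPlus y := by
    intro x y
    rw [hπ]
    constructor
    · intro h
      have := e.symm.injective h
      exact congrArg Subtype.val this
    · intro h
      exact congrArg _ (Subtype.ext h)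
  refine ⟨Fin n, instLat, π, ?_, ?_, ?_⟩
  · -- surjectivity
    intro q
    refine ⟨(e q).1, ?_⟩
    rw [hπ]
    have : π' (e q).1 = e q := Subtype.ext (by simp [hπ', stmt2_pv, (e q).2])
    show e.symm (π' (e q).1) = q
    rw [this, Equiv.symm_apply_apply]
  · -- fiber description
    intro x y
    rw [hπ'xy]
    unfold stmt2_pv
    have hne := hcov.lt.ne'
    by_cases hx : x = a <;> by_cases hy : y = a <;>
      simp [hx, hy, hne, eq_comm, And.comm] <;> tauto
  · -- join preservation
    intro x y
    have pva : stmt2_pv a aPlus a = aPlus := if_pos rfl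
    have pvne : ∀ {u : L}, u ≠ a → stmt2_pv a aPlus u = u := fun h => if_neg h
    have hl : ∀ u v : L,
        stmt2_pv a aPlus (stmt2_pv a aPlus u ⊔ v) = stmt2_pv a aPlus (u ⊔ v) := by
      intro u v
      by_cases hu : u = a
      · subst hu; rw [pva]; exact (stmt2_pv_sup_left hcov huniq v).symm
      · rw [pvne hu]
    have key : stmt2_pv a aPlus (x ⊔ y) =
        stmt2_pv a aPlus (stmt2_pv a aPlus x ⊔ stmt2_pv a aPlus y) := by
      rw [hl x (stmt2_pv a aPlus y), sup_comm x (stmt2_pv a aPlus y), hl y x,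
        sup_comm y x]
    have hsup : ∀ p q : Fin n, p ⊔ q = e.symm (e p ⊔ e q) := fun p q => rfl
    show e.symm (π' (x ⊔ y)) = π x ⊔ π y
    rw [hπ, hsup, Equiv.apply_symm_apply, Equiv.apply_symm_apply]
    have : (π' x ⊔ π' y : Q') = π' (x ⊔ y) := by
      apply Subtype.ext
      show stmt2_pv a aPlus (stmt2_pv a aPlus x ⊔ stmt2_pv a aPlus y) = stmt2_pv a aPlus (x ⊔ y)
      exact key.symm
    exact congrArg e.symm this.symm
end

section
/- Let L be a finite atomistic lattice and a ∈ L a meet-irreducible element that is not an atom. Then the quotient lattice L/∼ₐ (identifying a with its unique cover a₊) is atomistic. -/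
/-- A finite lattice (with bottom) is atomistic if every element is a join of
atoms. -/
def IsAtomisticLat (α : Type*) [Lattice α] [OrderBot α] : Prop :=
  ∀ x : α, ∃ s : Finset α, (∀ y ∈ s, IsAtom y) ∧ x = s.sup id

section Aux

/-- An opaque copy of `Fin n`, used as a `Type 0` carrier with no
pre-existing order instances. -/
def QuotType (n : ℕ) : Type := Fin n

def quotTypeEquiv (n : ℕ) : Fin n ≃ QuotType n := Equiv.refl (Fin n)

/-- A sup-bot-preserving map sends finset sups to finset sups. -/
lemma supmap_aux {α β : Type*} [SemilatticeSup α] [OrderBot α]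
    [SemilatticeSup β] [OrderBot β] (f : α → β) (hb : f ⊥ = ⊥)
    (hs : ∀ x y : α, f (x ⊔ y) = f x ⊔ f y) (s : Finset α) :
    f (s.sup id) = s.sup f := by
  induction s using Finset.cons_induction with
  | empty => simpa using hb
  | cons a s ha ih => simp [Finset.sup_cons, hs, ih]

lemma sup_filter_ne_bot_aux {α : Type*} [SemilatticeSup α] [OrderBot α]
    [DecidableEq α] (s : Finset α) :
    (s.filter (· ≠ ⊥)).sup id = s.sup id := by
  refine le_antisymm (Finset.sup_mono (Finset.filter_subset _ _)) ?_
  refine Finset.sup_le fun y hy => ?_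
  by_cases h : y = ⊥
  · simp [h]
  · exact Finset.le_sup (f := id) (Finset.mem_filter.2 ⟨hy, h⟩)

set_option linter.unusedSectionVars false

variable {L : Type*} [Lattice L] [OrderBot L] [Fintype L] [DecidableEq L]
variable {a aPlus : L}

lemma key_aux (huniq : ∀ b : L, a ⋖ b → b = aPlus) {z : L} (h : a < z) :
    aPlus ≤ z := by
  obtain ⟨c, hc, hcz⟩ := exists_covBy_le_of_lt h
  exact (huniq c hc) ▸ hcz

/-- The projection map. -/
def projA (a aPlus x : L) : L := if x = a then aPlus else x

lemma projA_ne (hcov : a ⋖ aPlus) (x : L) : projA a aPlus x ≠ a := by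
  unfold projA; split_ifs with h
  · exact hcov.ne'
  · exact h

lemma projA_of_ne {x : L} (h : x ≠ a) : projA a aPlus x = x := if_neg h

lemma projA_self : projA a aPlus a = aPlus := if_pos rfl

lemma le_projA (hcov : a ⋖ aPlus) (x : L) : x ≤ projA a aPlus x := by
  unfold projA; split_ifs with h
  · exact h ▸ hcov.le
  · exact le_rfl

lemma projA_sup_projA (hcov : a ⋖ aPlus) (huniq : ∀ b : L, a ⋖ b → b = aPlus)
    (x y : L) :
    projA a aPlus (projA a aPlus x ⊔ projA a aPlus y) = projA a aPlus (x ⊔ y) := by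
  have hsup : ∀ z : L, ¬ z ≤ a → aPlus ⊔ z = a ⊔ z := by
    intro z hz
    have h1 : a < a ⊔ z :=
      lt_of_le_of_ne le_sup_left (fun h => hz (le_sup_right.trans h.ge))
    have h2 : aPlus ≤ a ⊔ z := key_aux huniq h1
    exact le_antisymm (sup_le h2 le_sup_right)
      (sup_le (hcov.le.trans le_sup_left) le_sup_right)
  by_cases hx : x = a <;> by_cases hy : y = a
  · rw [hx, hy, projA_self, sup_idem, sup_idem, projA_self,
      projA_of_ne hcov.ne']
  · rw [hx, projA_self, projA_of_ne hy]
    by_cases hya : y ≤ a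
    · rw [sup_eq_left.2 (hya.trans hcov.le), sup_eq_left.2 hya,
        projA_of_ne hcov.ne', projA_self]
    · rw [hsup y hya]
  · rw [hy, projA_self, projA_of_ne hx]
    by_cases hxa : x ≤ a
    · rw [sup_eq_right.2 (hxa.trans hcov.le), sup_eq_right.2 hxa,
        projA_of_ne hcov.ne', projA_self]
    · rw [sup_comm x aPlus, sup_comm x a, hsup x hxa]
  · rw [projA_of_ne hx, projA_of_ne hy]

lemma projA_eq_iff (hcov : a ⋖ aPlus) (x y : L) :
    projA a aPlus x = projA a aPlus y ↔
      (x = y ∨ (x = a ∧ y = aPlus) ∨ (x = aPlus ∧ y = a)) := by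
  have hne : a ≠ aPlus := hcov.ne
  unfold projA
  split_ifs with h1 h2 h2 <;> simp_all [eq_comm]

lemma inf_ne_aux (hcov : a ⋖ aPlus) (huniq : ∀ b : L, a ⋖ b → b = aPlus)
    {x y : L} (hx : x ≠ a) (hy : y ≠ a) : x ⊓ y ≠ a := by
  intro h
  have hax : a < x := lt_of_le_of_ne (h ▸ inf_le_left) (Ne.symm hx)
  have hay : a < y := lt_of_le_of_ne (h ▸ inf_le_right) (Ne.symm hy)
  have : aPlus ≤ x ⊓ y := le_inf (key_aux huniq hax) (key_aux huniq hay)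
  rw [h] at this
  exact hcov.lt.not_ge this

end Aux

/-- Let `L` be a finite atomistic lattice and `a ∈ L`
meet-irreducible (with unique cover `a₊`) and not an atom.  Then the quotient
lattice `L/∼ₐ` (identifying `a` with `a₊`) is atomistic. -/
theorem stmt_3 {L : Type*} [Lattice L] [OrderBot L] [Fintype L]
    (hL : IsAtomisticLat L) (a aPlus : L)
    (hcov : a ⋖ aPlus) (huniq : ∀ b : L, a ⋖ b → b = aPlus)
    (hnotatom : ¬ IsAtom a) :
    ∃ (Q : Type) (_ : Lattice Q) (_ : OrderBot Q) (π : L → Q),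
      Function.Surjective π ∧
      (∀ x y : L, π x = π y ↔
        (x = y ∨ (x = a ∧ y = aPlus) ∨ (x = aPlus ∧ y = a))) ∧
      (∀ x y : L, π (x ⊔ y) = π x ⊔ π y) ∧
      IsAtomisticLat Q := by
  classical
  -- the subtype quotient
  set S := {x : L // x ≠ a} with hS
  letI instS : Lattice S :=
    { Subtype.partialOrder _ with
      sup := fun p q => ⟨projA a aPlus (p.1 ⊔ q.1), projA_ne hcov _⟩
      inf := fun p q => ⟨p.1 ⊓ q.1, inf_ne_aux hcov huniq p.2 q.2⟩
      le_sup_left := fun p q =>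
        (le_sup_left (a := p.1) (b := q.1)).trans (le_projA hcov _)
      le_sup_right := fun p q =>
        (le_sup_right (a := p.1) (b := q.1)).trans (le_projA hcov _)
      sup_le := by
        rintro ⟨x, hx⟩ ⟨y, hy⟩ ⟨z, hz⟩ (hxz : x ≤ z) (hyz : y ≤ z)
        show projA a aPlus (x ⊔ y) ≤ z
        by_cases h : x ⊔ y = a
        · rw [h, projA_self]
          exact key_aux huniq (lt_of_le_of_ne (h ▸ sup_le hxz hyz) (Ne.symm hz))
        · rw [projA_of_ne h]; exact sup_le hxz hyz
      inf_le_left := fun p q => inf_le_left (a := p.1) (b := q.1)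
      inf_le_right := fun p q => inf_le_right (a := p.1) (b := q.1)
      le_inf := fun p q r h1 h2 => le_inf (α := L) h1 h2 }
  letI instSB : OrderBot S :=
    { bot := ⟨projA a aPlus ⊥, projA_ne hcov _⟩
      bot_le := by
        rintro ⟨x, hx⟩
        show projA a aPlus ⊥ ≤ x
        by_cases h : (⊥ : L) = a
        · rw [h, projA_self]
          exact key_aux huniq (lt_of_le_of_ne (h ▸ bot_le) (Ne.symm hx))
        · rw [projA_of_ne h]; exact bot_le }
  -- projection to S
  set π₀ : L → S := fun x => ⟨projA a aPlus x, projA_ne hcov _⟩ with hπ₀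
  have π₀_sup : ∀ x y : L, π₀ (x ⊔ y) = π₀ x ⊔ π₀ y := by
    intro x y
    apply Subtype.ext
    exact (projA_sup_projA hcov huniq x y).symm
  -- now shrink to a Type 0
  set Q := QuotType (Fintype.card S) with hQ
  set e : S ≃ Q := (Fintype.equivFin S).trans (quotTypeEquiv _) with he
  letI : Max Q := ⟨fun p q => e (e.symm p ⊔ e.symm q)⟩
  letI : Min Q := ⟨fun p q => e (e.symm p ⊓ e.symm q)⟩
  letI : LE Q := ⟨fun p q => e.symm p ≤ e.symm q⟩
  letI : LT Q := ⟨fun p q => e.symm p < e.symm q⟩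
  letI instQ : Lattice Q :=
    e.symm.injective.lattice e.symm Iff.rfl Iff.rfl
      (fun p q => by
        show e.symm (e (e.symm p ⊔ e.symm q)) = _
        simp)
      (fun p q => by
        show e.symm (e (e.symm p ⊓ e.symm q)) = _
        simp)
  letI instQB : OrderBot Q :=
    { bot := e ⊥
      bot_le := fun q => by
        show e.symm (e ⊥) ≤ e.symm q
        simp }
  have eord : ∀ p q : S, e p ≤ e q ↔ p ≤ q := by
    intro p q
    show e.symm (e p) ≤ e.symm (e q) ↔ p ≤ q
    simp
  have esup : ∀ p q : S, e (p ⊔ q) = e p ⊔ e q := by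
    intro p q
    show e (p ⊔ q) = e (e.symm (e p) ⊔ e.symm (e q))
    simp
  have ebot : e ⊥ = (⊥ : Q) := rfl
  set π : L → Q := fun x => e (π₀ x) with hπ
  have πsup : ∀ x y : L, π (x ⊔ y) = π x ⊔ π y := by
    intro x y
    show e (π₀ (x ⊔ y)) = e (π₀ x) ⊔ e (π₀ y)
    rw [π₀_sup, esup]
  have πbot : π ⊥ = ⊥ := rfl
  have πfix : ∀ p : S, π p.1 = e p := by
    intro p
    show e (π₀ p.1) = e p
    exact congrArg e (Subtype.ext (projA_of_ne p.2))
  refine ⟨Q, instQ, instQB, π, ?_, ?_, πsup, ?_⟩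
  · intro q
    exact ⟨(e.symm q).1, by rw [πfix, Equiv.apply_symm_apply]⟩
  · intro x y
    rw [← projA_eq_iff hcov (a := a) (aPlus := aPlus)]
    constructor
    · intro h
      exact congrArg Subtype.val (e.injective h)
    · intro h
      exact congrArg e (Subtype.ext h)
  · -- atomisticity
    have hatom : ∀ p : L, IsAtom p → (π p ≠ ⊥) → IsAtom (π p) := by
      intro p hp hne
      refine ⟨hne, fun b hb => ?_⟩
      have h1 : e.symm b ≤ π₀ p := by
        refine (eord (e.symm b) (π₀ p)).1 ?_
        rw [Equiv.apply_symm_apply]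
        exact hb.le
      have h2 : e.symm b ≠ π₀ p := fun h => hb.ne (by
        show b = e (π₀ p)
        rw [← h, Equiv.apply_symm_apply])
      have hb' : e.symm b < π₀ p := lt_of_le_of_ne h1 h2
      have hpa : p ≠ a := fun h => hnotatom (h ▸ hp)
      have hval : (π₀ p).1 = p := projA_of_ne hpa
      have hlt : (e.symm b).1 < p := hval ▸ hb'
      have hbbot : (e.symm b).1 = ⊥ := hp.2 _ hlt
      have hbotne : (⊥ : L) ≠ a := hbbot ▸ (e.symm b).2
      have hB : e.symm b = (⊥ : S) :=
        Subtype.ext (by rw [hbbot]; exact (projA_of_ne hbotne).symm)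
      rw [← ebot, ← hB, Equiv.apply_symm_apply]
    intro q
    obtain ⟨t, ht, hxt⟩ := hL (e.symm q).1
    have hq : π (e.symm q).1 = q := by rw [πfix, Equiv.apply_symm_apply]
    refine ⟨(t.image π).filter (· ≠ ⊥), ?_, ?_⟩
    · intro y hy
      rw [Finset.mem_filter, Finset.mem_image] at hy
      obtain ⟨⟨p, hp, rfl⟩, hyne⟩ := hy
      exact hatom p (ht p hp) hyne
    · rw [sup_filter_ne_bot_aux, Finset.sup_image, ← hq, hxt]
      rw [show (id ∘ π) = π from rfl]
      exact supmap_aux π πbot πsup t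
end

section
/- Let L and L' be finite lattices and φ : L → L' a join-preserving map. If φ is not injective, then there exists a meet-irreducible element a ∈ L with φ(a) = φ(a₊), where a₊ is the unique element covering a. -/
/-- Let `L`, `L'` be finite lattices and `φ : L → L'`
join-preserving.  If `φ` is not injective, then there is a meet-irreducible
element `a ∈ L` (covered by exactly one element `a₊`) with `φ a = φ a₊`. -/
theorem stmt_4 {L L' : Type*} [Lattice L] [Fintype L] [Lattice L'] [Fintype L']
    (φ : L → L') (hjoin : ∀ p q : L, φ (p ⊔ q) = φ p ⊔ φ q)
    (hninj : ¬ Function.Injective φ) :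
    ∃ a aPlus : L, a ⋖ aPlus ∧ (∀ b : L, a ⋖ b → b = aPlus) ∧
      φ a = φ aPlus := by
  have hmono : Monotone φ := fun u v huv => by
    have : φ v = φ u ⊔ φ v := by rw [← hjoin, sup_eq_right.mpr huv]
    rw [this]; exact le_sup_left
  -- From a strict pair with equal images, get a covering pair with equal images
  have key : ∀ x y : L, x < y → φ x = φ y → ∃ z : L, x ⋖ z ∧ φ x = φ z := by
    intro x y hxy hφ
    obtain ⟨z, hzc, hzy⟩ := exists_covBy_le_of_lt hxy
    exact ⟨z, hzc, le_antisymm (hmono hzc.le) (hφ ▸ hmono hzy)⟩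
  -- S : set of x admitting a cover with equal image
  have hS : ∃ x y : L, x ⋖ y ∧ φ x = φ y := by
    simp only [Function.Injective, not_forall] at hninj
    obtain ⟨p, q, hpq, hne⟩ := hninj
    rcases (le_sup_left : p ≤ p ⊔ q).lt_or_eq with h | h
    · obtain ⟨z, hz⟩ := key p (p ⊔ q) h (by rw [hjoin, ← hpq, sup_idem])
      exact ⟨p, z, hz⟩
    · have hq : q ≤ p := sup_eq_left.mp h.symm
      have hqp : q < q ⊔ p := by
        rcases (le_sup_left : q ≤ q ⊔ p).lt_or_eq with h' | h'
        · exact h'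
        · exact absurd (le_antisymm (sup_eq_left.mp h'.symm) hq) hne
      obtain ⟨z, hz⟩ := key q (q ⊔ p) hqp (by rw [hjoin, hpq, sup_idem])
      exact ⟨q, z, hz⟩
  classical
  -- pick a maximal such x
  let S : Finset L := Finset.univ.filter (fun x => ∃ y, x ⋖ y ∧ φ x = φ y)
  have hSne : S.Nonempty := by
    obtain ⟨x, y, hc, hφ⟩ := hS
    exact ⟨x, by simp [S]; exact ⟨y, hc, hφ⟩⟩
  obtain ⟨a, haS, hamax⟩ := S.exists_maximal hSne
  obtain ⟨aPlus, hcov, hφa⟩ : ∃ y, a ⋖ y ∧ φ a = φ y := by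
    simpa [S] using haS
  refine ⟨a, aPlus, hcov, ?_, hφa⟩
  intro b hb
  by_contra hne
  -- b ≠ aPlus, both cover a
  have hab : φ a ≤ φ b := hmono hb.le
  have hnotle : ¬ aPlus ≤ b := fun h => by
    rcases h.lt_or_eq with h' | h'
    · exact hb.2 hcov.lt h'
    · exact hne h'.symm
  have hblt : b < aPlus ⊔ b := lt_of_le_of_ne le_sup_right
    (fun h => hnotle (h ▸ le_sup_left))
  have hφb : φ b = φ (aPlus ⊔ b) := by
    rw [hjoin, ← hφa]
    exact (sup_eq_right.mpr hab).symm
  obtain ⟨z, hzc, hzφ⟩ := key b (aPlus ⊔ b) hblt hφb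
  have hbS : b ∈ S := by simp [S]; exact ⟨z, hzc, hzφ⟩
  exact lt_irrefl a (lt_of_lt_of_le hb.lt (hamax hbS hb.le))
end

section
/- Every surjective join-preserving map φ : L → L' between finite lattices with |L| > |L'| factors as a composition of quotient maps πₐ (each collapsing a meet-irreducible element with its unique cover) followed by a bijective join-preserving map. -/
universe u

/-- A bundled finite lattice. -/
structure FinLat : Type (u + 1) where
  carrier : Type u
  [lat : Lattice carrier]
  [fin : Fintype carrier]

attribute [instance] FinLat.lat FinLat.fin

/-- `π` is the canonical quotient map `π_a` of a finite lattice identifying a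
meet-irreducible element `a` (one with a unique cover `a₊`) with its unique
cover: `π` is surjective, join-preserving, and its fibres are exactly the
classes of the equivalence relation `∼ₐ`. -/
def IsElemQuotient {M N : Type*} [Lattice M] [Lattice N] (π : M → N) : Prop :=
  Function.Surjective π ∧ (∀ x y : M, π (x ⊔ y) = π x ⊔ π y) ∧
  ∃ a aPlus : M, a ⋖ aPlus ∧ (∀ b : M, a ⋖ b → b = aPlus) ∧
    ∀ x y : M, π x = π y ↔
      (x = y ∨ (x = a ∧ y = aPlus) ∨ (x = aPlus ∧ y = a))

/-- The composite `f (m-1) ∘ ⋯ ∘ f 1 ∘ f 0` of a chain of maps between the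
carriers of a sequence of lattices. -/
def chainComp (T : ℕ → FinLat.{u})
    (f : ∀ i, (T i).carrier → (T (i + 1)).carrier) :
    ∀ m, (T 0).carrier → (T m).carrier
  | 0 => id
  | m + 1 => f m ∘ chainComp T f m

set_option linter.unusedSectionVars false

def consT (NN : FinLat.{u}) (T : ℕ → FinLat.{u}) : ℕ → FinLat.{u} :=
  fun i => Nat.rec NN (fun j _ => T j) i

def consF (NN : FinLat.{u}) (T : ℕ → FinLat.{u}) (g : NN.carrier → (T 0).carrier)
    (f : ∀ i, (T i).carrier → (T (i + 1)).carrier) :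
    ∀ i, (consT NN T i).carrier → (consT NN T (i + 1)).carrier :=
  fun i => Nat.rec g (fun j _ => f j) i

lemma consChain (NN : FinLat.{u}) (T : ℕ → FinLat.{u}) (g : NN.carrier → (T 0).carrier)
    (f : ∀ i, (T i).carrier → (T (i + 1)).carrier) :
    ∀ (k : ℕ) (y : NN.carrier),
      chainComp (consT NN T) (consF NN T g f) (k + 1) y = chainComp T f k (g y) := by
  intro k
  induction k with
  | zero => intro y; rfl
  | succ j ih =>
      intro y
      show f j (chainComp (consT NN T) (consF NN T g f) (j + 1) y)
        = f j (chainComp T f j (g y))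
      rw [ih y]


section Aux

variable {L : Type u} {L' : Type u} [Lattice L] [Fintype L] [Lattice L'] [Fintype L']

lemma jmono (φ : L → L') (hjoin : ∀ p q : L, φ (p ⊔ q) = φ p ⊔ φ q)
    {p q : L} (h : p ≤ q) : φ p ≤ φ q := by
  have h2 : φ q = φ p ⊔ φ q := by rw [← hjoin, sup_eq_right.2 h]
  rw [h2]; exact le_sup_left

lemma coverPair (φ : L → L') (hjoin : ∀ p q : L, φ (p ⊔ q) = φ p ⊔ φ q)
    {p q : L} (hlt : p < q) (heq : φ p = φ q) : ∃ c, p ⋖ c ∧ φ p = φ c := by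
  obtain ⟨c, hc, hcq⟩ := exists_covBy_le_of_lt hlt
  exact ⟨c, hc, le_antisymm (jmono φ hjoin hc.lt.le) (heq ▸ jmono φ hjoin hcq)⟩

lemma exists_a (φ : L → L') (hjoin : ∀ p q : L, φ (p ⊔ q) = φ p ⊔ φ q)
    (hninj : ¬ Function.Injective φ) :
    ∃ a aPlus : L, a ⋖ aPlus ∧ (∀ b, a ⋖ b → b = aPlus) ∧ φ a = φ aPlus := by
  have hpair : ∃ p q : L, p < q ∧ φ p = φ q := by
    rw [Function.not_injective_iff] at hninj
    obtain ⟨x, y, hfeq, hne⟩ := hninj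
    by_cases h : y ≤ x
    · exact ⟨y, x, lt_of_le_of_ne h (fun e => hne e.symm), hfeq.symm⟩
    · refine ⟨x, x ⊔ y, lt_of_le_of_ne le_sup_left (fun he => h (sup_eq_left.1 he.symm)), ?_⟩
      rw [hjoin, ← hfeq, sup_idem]
  obtain ⟨p, q, hpq, hfe⟩ := hpair
  obtain ⟨c, hc, hfc⟩ := coverPair φ hjoin hpq hfe
  set S : Set L := {x | ∃ y, x ⋖ y ∧ φ x = φ y} with hS
  obtain ⟨a, haS, hmax⟩ := Set.Finite.exists_maximalFor id S (Set.toFinite S) ⟨p, c, hc, hfc⟩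
  obtain ⟨y, hay, hfay⟩ := haS
  refine ⟨a, y, hay, ?_, hfay⟩
  intro b hab
  by_contra hbne
  have hyb : ¬ y ≤ b := by
    intro h
    rcases eq_or_lt_of_le h with he | hl
    · exact hbne he.symm
    · exact hab.2 hay.lt hl
  have hlt : b < b ⊔ y := lt_of_le_of_ne le_sup_left (fun he => hyb (sup_eq_left.1 he.symm))
  have hfb : φ b = φ (b ⊔ y) := by
    rw [hjoin, ← hfay, ← hjoin, sup_eq_left.mpr hab.lt.le]
  obtain ⟨c2, hc2, hfc2⟩ := coverPair φ hjoin hlt hfb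
  exact absurd (hmax (j := b) ⟨c2, hc2, hfc2⟩ hab.lt.le) (not_le_of_gt hab.lt)


lemma step (φ : L → L') (hjoin : ∀ p q : L, φ (p ⊔ q) = φ p ⊔ φ q)
    (hninj : ¬ Function.Injective φ) :
    ∃ (NN : FinLat.{u}) (π : L → NN.carrier) (φ' : NN.carrier → L'),
      IsElemQuotient π ∧ (∀ x, φ' (π x) = φ x) ∧
      (∀ u v : NN.carrier, φ' (u ⊔ v) = φ' u ⊔ φ' v) ∧
      Fintype.card NN.carrier + 1 = Fintype.card L := by
  classical
  obtain ⟨a, aPlus, hcov, huni, hphi⟩ := exists_a φ hjoin hninj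
  have hne : aPlus ≠ a := hcov.lt.ne'
  have hane : a ≠ aPlus := hcov.lt.ne
  have haP : a ≤ aPlus := hcov.lt.le
  have hup : ∀ z : L, a < z → aPlus ≤ z := by
    intro z hz
    obtain ⟨c, hc, hcz⟩ := exists_covBy_le_of_lt hz
    exact (huni c hc) ▸ hcz
  let N := {x : L // x ≠ a}
  let π : L → N := fun x => if h : x = a then ⟨aPlus, hne⟩ else ⟨x, h⟩
  have hπa : π a = ⟨aPlus, hne⟩ := dif_pos rfl
  have hπ : ∀ (x : L) (h : x ≠ a), π x = ⟨x, h⟩ := fun x h => dif_neg h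
  have hπid : ∀ z : N, π z.val = z := fun z => hπ z.val z.prop
  have hφπ : ∀ x, φ (π x).val = φ x := by
    intro x
    by_cases h : x = a
    · subst h; rw [hπa]; exact hphi.symm
    · rw [hπ x h]
  have hsup1 : ∀ x y : L, π ((π x).val ⊔ y) = π (x ⊔ y) := by
    intro x y
    rcases eq_or_ne x a with h | h
    · rw [h, hπa]
      by_cases h2 : a ⊔ y = a
      · have hy : y ≤ a := sup_eq_left.1 h2
        have h3 : aPlus ⊔ y = aPlus := sup_eq_left.2 (hy.trans haP)
        rw [h2, h3, hπa, hπ aPlus hne]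
      · have hlt : a < a ⊔ y := lt_of_le_of_ne le_sup_left (Ne.symm h2)
        have h3 : aPlus ⊔ y = a ⊔ y :=
          le_antisymm (sup_le (hup _ hlt) le_sup_right) (sup_le_sup_right haP y)
        rw [h3]
    · rw [hπ x h]
  letI S : SemilatticeSup N :=
    { (inferInstance : PartialOrder N) with
      sup := fun u v => π (u.val ⊔ v.val)
      le_sup_left := fun u v => by
        show u.val ≤ (π (u.val ⊔ v.val)).val
        by_cases h : u.val ⊔ v.val = a
        · rw [h, hπa]; exact (le_sup_left.trans_eq h).trans haP
        · rw [hπ _ h]; exact le_sup_left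
      le_sup_right := fun u v => by
        show v.val ≤ (π (u.val ⊔ v.val)).val
        by_cases h : u.val ⊔ v.val = a
        · rw [h, hπa]; exact (le_sup_right.trans_eq h).trans haP
        · rw [hπ _ h]; exact le_sup_right
      sup_le := fun u v w hu hv => by
        have hle : u.val ⊔ v.val ≤ w.val := sup_le hu hv
        show (π (u.val ⊔ v.val)).val ≤ w.val
        by_cases h : u.val ⊔ v.val = a
        · rw [h, hπa]
          exact hup _ (lt_of_le_of_ne (h.symm.trans_le hle) (Ne.symm w.prop))
        · rw [hπ _ h]; exact hle }
  let i0 : L := Finset.univ.inf' ⟨a, Finset.mem_univ a⟩ id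
  have hbot : ∀ w : N, π i0 ≤ w := by
    intro w
    have h0 : i0 ≤ w.val := Finset.inf'_le id (Finset.mem_univ _)
    show (π i0).val ≤ w.val
    by_cases h : i0 = a
    · rw [h, hπa]; exact hup _ (lt_of_le_of_ne (h.symm.trans_le h0) (Ne.symm w.prop))
    · rw [hπ _ h]; exact h0
  letI Lat : Lattice N :=
    { S with
      inf := fun u v => (Finset.univ.filter fun w : N => w ≤ u ∧ w ≤ v).sup'
        ⟨π i0, Finset.mem_filter.2 ⟨Finset.mem_univ _, hbot u, hbot v⟩⟩ id
      inf_le_left := fun u v => Finset.sup'_le _ _ fun w hw => (Finset.mem_filter.1 hw).2.1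
      inf_le_right := fun u v => Finset.sup'_le _ _ fun w hw => (Finset.mem_filter.1 hw).2.2
      le_inf := fun u v w h1 h2 =>
        Finset.le_sup' id (Finset.mem_filter.2 ⟨Finset.mem_univ _, h1, h2⟩) }
  refine ⟨{ carrier := N }, π, fun u => φ u.val, ⟨?_, ?_, a, aPlus, hcov, huni, ?_⟩, hφπ, ?_, ?_⟩
  · exact fun z => ⟨z.val, hπid z⟩
  · intro x y
    show π (x ⊔ y) = π ((π x).val ⊔ (π y).val)
    rw [hsup1, sup_comm x, ← hsup1, sup_comm]
  · intro x y
    by_cases hx : x = a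
    · by_cases hy : y = a
      · rw [hx, hy]; simp
      · rw [hx, hπa, hπ y hy, Subtype.mk.injEq]
        constructor
        · intro h; exact Or.inr (Or.inl ⟨rfl, h.symm⟩)
        · rintro (h | ⟨-, h⟩ | ⟨h, -⟩)
          · exact absurd h.symm hy
          · exact h.symm
          · exact absurd h hane
    · by_cases hy : y = a
      · rw [hy, hπ x hx, hπa, Subtype.mk.injEq]
        constructor
        · intro h; exact Or.inr (Or.inr ⟨h, rfl⟩)
        · rintro (h | ⟨h, -⟩ | ⟨h, -⟩)
          · exact absurd h hx
          · exact absurd h hx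
          · exact h
      · rw [hπ x hx, hπ y hy, Subtype.mk.injEq]
        constructor
        · exact fun h => Or.inl h
        · rintro (h | ⟨h, -⟩ | ⟨-, h⟩)
          · exact h
          · exact absurd h hx
          · exact absurd h hy
  · intro u v
    show φ (π (u.val ⊔ v.val)).val = φ u.val ⊔ φ v.val
    rw [hφπ, hjoin]
  · show Fintype.card N + 1 = Fintype.card L
    have h1 : Fintype.card N = Fintype.card L - Fintype.card {x : L // x = a} :=
      Fintype.card_subtype_compl _
    have h2 : Fintype.card {x : L // x = a} = 1 := Fintype.card_subtype_eq a
    have h3 : 0 < Fintype.card L := Fintype.card_pos_iff.2 ⟨a⟩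
    omega


theorem main_aux : ∀ (n : ℕ) (L L' : Type u) [Lattice L] [Fintype L] [Lattice L'] [Fintype L']
    (φ : L → L'), Fintype.card L ≤ n → Function.Surjective φ →
    (∀ p q : L, φ (p ⊔ q) = φ p ⊔ φ q) → Fintype.card L' < Fintype.card L →
    ∃ (m : ℕ) (T : ℕ → FinLat.{u}) (f₀ : L → (T 0).carrier)
      (f : ∀ i, (T i).carrier → (T (i + 1)).carrier)
      (ψ : (T m).carrier → L'),
      m + 1 = Fintype.card L - Fintype.card L' ∧
      IsElemQuotient f₀ ∧
      (∀ i < m, IsElemQuotient (f i)) ∧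
      Function.Bijective ψ ∧
      (∀ u v : (T m).carrier, ψ (u ⊔ v) = ψ u ⊔ ψ v) ∧
      (∀ x : L, ψ (chainComp T f m (f₀ x)) = φ x) := by
  intro n
  induction n with
  | zero =>
      intro L L' _ _ _ _ φ hle _ _ hcard
      omega
  | succ n ih =>
      intro L L' _ _ _ _ φ hle hsurj hjoin hcard
      have hninj : ¬ Function.Injective φ := fun hinj =>
        absurd (Fintype.card_le_of_injective φ hinj) (by omega)
      obtain ⟨NN, π, φ', hquot, hcomm, hjoin', hcardN⟩ := step φ hjoin hninj
      have hsurj' : Function.Surjective φ' := fun l' => by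
        obtain ⟨x, hx⟩ := hsurj l'
        exact ⟨π x, by rw [hcomm]; exact hx⟩
      by_cases hb : Fintype.card L' < Fintype.card NN.carrier
      · obtain ⟨m, T, f₀', f, ψ, h1, h2, h3, h4, h5, h6⟩ :=
          ih NN.carrier L' φ' (by omega) hsurj' hjoin' hb
        refine ⟨m + 1, consT NN T, π, consF NN T f₀' f, ψ, by omega, hquot, ?_, h4, h5, ?_⟩
        · intro i hi
          match i with
          | 0 => exact h2
          | (j + 1) => exact h3 j (by omega)
        · intro x
          rw [consChain NN T f₀' f m (π x), h6 (π x), hcomm]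
      · have hc2 : Fintype.card NN.carrier = Fintype.card L' :=
          le_antisymm (not_lt.1 hb) (Fintype.card_le_of_surjective φ' hsurj')
        have hbij : Function.Bijective φ' :=
          (Fintype.bijective_iff_surjective_and_card φ').2 ⟨hsurj', hc2⟩
        refine ⟨0, fun _ => NN, π, fun _ => id, φ', by omega, hquot, ?_, hbij, hjoin', ?_⟩
        · intro i hi; omega
        · intro x; exact hcomm x


end Aux

/-- Every surjective join-preserving map `φ : L → L'`
between finite lattices with `|L| > |L'|` factors as a composition of
quotient maps `π_a` (each collapsing a meet-irreducible element with its
unique cover) followed by a bijective join-preserving map.  The number of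
quotient maps is necessarily `|L| − |L'|`. -/
theorem stmt_14 {L L' : Type u} [Lattice L] [Fintype L] [Lattice L']
    [Fintype L'] (φ : L → L') (hsurj : Function.Surjective φ)
    (hjoin : ∀ p q : L, φ (p ⊔ q) = φ p ⊔ φ q)
    (hcard : Fintype.card L' < Fintype.card L) :
    ∃ (m : ℕ) (T : ℕ → FinLat.{u}) (f₀ : L → (T 0).carrier)
      (f : ∀ i, (T i).carrier → (T (i + 1)).carrier)
      (ψ : (T m).carrier → L'),
      m + 1 = Fintype.card L - Fintype.card L' ∧
      IsElemQuotient f₀ ∧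
      (∀ i < m, IsElemQuotient (f i)) ∧
      Function.Bijective ψ ∧
      (∀ u v : (T m).carrier, ψ (u ⊔ v) = ψ u ⊔ ψ v) ∧
      (∀ x : L, ψ (chainComp T f m (f₀ x)) = φ x) :=
  main_aux (Fintype.card L) L L' φ le_rfl hsurj hjoin hcard
end
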